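/- Let (M, φ) and (N, ψ) be size pairs and let f : M → N be a homeomorphism with max_{P∈M} |φ(P) − ψ(f(P))| ≤ h. Then for every (x,y) ∈ Δ⁺ with x − h < y + h, the inequality ℓ*_{(M,φ)}(x − h, y + h) ≤ ℓ*_{(N,ψ)}(x, y) holds. -/

import Mathlib

open Set Topology
open scoped ENNReal

noncomputable def rsf {M : Type*} [TopologicalSpace M] (φ : M → ℝ) (x y : ℝ) : ℕ :=
  Set.ncard {C : Set M | ∃ P, φ P ≤ x ∧ C = connectedComponentIn {Q | φ Q ≤ y} P}

noncomputable def mult {M : Type*} [TopologicalSpace M] (φ : M → ℝ) (p : ℝ × ℝ) : ℤ :=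
  sInf {z : ℤ | ∃ ε : ℝ, 0 < ε ∧ p.1 + ε < p.2 - ε ∧
    z = (rsf φ (p.1 + ε) (p.2 - ε) : ℤ) - (rsf φ (p.1 - ε) (p.2 - ε) : ℤ)
      - (rsf φ (p.1 + ε) (p.2 + ε) : ℤ) + (rsf φ (p.1 - ε) (p.2 + ε) : ℤ)}

noncomputable def multInf {M : Type*} [TopologicalSpace M] (φ : M → ℝ) (k : ℝ) : ℤ :=
  sInf {z : ℤ | ∃ ε : ℝ, 0 < ε ∧ k + ε < 1 / ε ∧
    z = (rsf φ (k + ε) (1 / ε) : ℤ) - (rsf φ (k - ε) (1 / ε) : ℤ)}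

open scoped Classical in
noncomputable def eDist (p q : ℝ × EReal) : ℝ≥0∞ :=
  if p.2 = ⊤ ∧ q.2 = ⊤ then ENNReal.ofReal |p.1 - q.1|
  else if p.2 = ⊤ ∨ q.2 = ⊤ then ⊤
  else ENNReal.ofReal (min (max |p.1 - q.1| |p.2.toReal - q.2.toReal|)
    (max ((p.2.toReal - p.1) / 2) ((q.2.toReal - q.1) / 2)))

def IsRepSeq {M : Type*} [TopologicalSpace M] (φ : M → ℝ) (a : ℕ → ℝ × EReal) : Prop :=
  (∃ k : ℝ, a 0 = (k, ⊤) ∧ 0 < multInf φ k) ∧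
  (∀ i : ℕ, 0 < i →
    (∃ x y : ℝ, a i = (x, (y : EReal)) ∧ x < y ∧ 0 < mult φ (x, y)) ∨
    (∃ x : ℝ, a i = (x, (x : EReal)))) ∧
  (∀ x y : ℝ, x < y → 0 < mult φ (x, y) →
    Set.ncard {i : ℕ | a i = (x, (y : EReal))} = (mult φ (x, y)).toNat) ∧
  {i : ℕ | ∃ x : ℝ, a i = (x, (x : EReal))}.Infinite

noncomputable def dMatchSeq (a b : ℕ → ℝ × EReal) : ℝ≥0∞ :=
  ⨅ σ : {σ : ℕ → ℕ // Function.Bijective σ}, ⨆ i : ℕ, eDist (a i) (b (σ.1 i))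

noncomputable def dMatch {M N : Type*} [TopologicalSpace M] [TopologicalSpace N]
    (φ : M → ℝ) (ψ : N → ℝ) : ℝ≥0∞ :=
  sInf {s : ℝ≥0∞ | ∃ a b, IsRepSeq φ a ∧ IsRepSeq ψ b ∧ s = dMatchSeq a b}

/-!
A homeomorphism `f` moving function values by at most `h` sends the sublevel set `{φ ≤ x - h}`
into `{ψ ≤ x}`, and pulls `{ψ ≤ y}` back into `{φ ≤ y + h}`. Hence `P ↦ f P` induces a map from the
components of `{φ ≤ y + h}` meeting `{φ ≤ x - h}` to the components of `{ψ ≤ y}` meeting `{ψ ≤ x}`,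
and it is injective: if `f P` and `f P'` lie in one component of `{ψ ≤ y}`, its preimage is a
connected subset of `{φ ≤ y + h}` containing `P` and `P'`. The target is finite because `{ψ ≤ x}`
is compact and covered by the open components of `{ψ < y}`.
-/

open Function

theorem Set.ncard_image_le_ncard_image_of_eq_imp_eq {α β γ : Type*} {s : Set α} {g : α → β}
    {g' : α → γ} (hs : (g '' s).Finite) (h : ∀ a ∈ s, ∀ b ∈ s, g a = g b → g' a = g' b) :
    (g' '' s).ncard ≤ (g '' s).ncard := by
  rcases s.eq_empty_or_nonempty with rfl | ⟨a₀, -⟩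
  · simp
  have : Nonempty α := ⟨a₀⟩
  refine ncard_le_ncard_of_injOn (fun c => g (invFunOn g' s c)) ?_ ?_ hs
  · rintro _ ⟨a, ha, rfl⟩
    exact mem_image_of_mem g (invFunOn_mem ⟨a, ha, rfl⟩)
  · rintro _ ⟨a, ha, rfl⟩ _ ⟨b, hb, rfl⟩ hab
    have ha' := invFunOn_eq (f := g') ⟨a, ha, rfl⟩
    have hb' := invFunOn_eq (f := g') ⟨b, hb, rfl⟩
    rw [← ha', ← hb']
    exact h _ (invFunOn_mem ⟨a, ha, rfl⟩) _ (invFunOn_mem ⟨b, hb, rfl⟩) hab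

section Topology

variable {α β : Type*} [TopologicalSpace α] [TopologicalSpace β]

theorem ContinuousOn.connectedComponentIn_eq_of_mapsTo {g : α → β} {T : Set α} {S : Set β}
    (hg : ContinuousOn g T) (hTS : MapsTo g T S) {a b : α} (ha : a ∈ T) (hb : b ∈ T)
    (hab : connectedComponentIn T a = connectedComponentIn T b) :
    connectedComponentIn S (g a) = connectedComponentIn S (g b) := by
  have hba : b ∈ connectedComponentIn T a := hab ▸ mem_connectedComponentIn hb
  refine connectedComponentIn_eq (connectedComponentIn_mono _ hTS.image_subset ?_)
  exact hg.image_connectedComponentIn_subset ha (mem_image_of_mem g hba)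

theorem IsCompact.finite_image_connectedComponentIn [LocallyConnectedSpace α] {K U T : Set α}
    (hK : IsCompact K) (hU : IsOpen U) (hKU : K ⊆ U) (hUT : U ⊆ T) :
    (connectedComponentIn T '' K).Finite := by
  have hcover : K ⊆ ⋃ P ∈ K, connectedComponentIn U P := fun P hP =>
    mem_biUnion hP (mem_connectedComponentIn (hKU hP))
  obtain ⟨Z, -, hZfin, hZcover⟩ :=
    hK.elim_finite_subcover_image (fun P _ => hU.connectedComponentIn) hcover
  refine (hZfin.image (connectedComponentIn T)).subset ?_
  rintro _ ⟨P, hP, rfl⟩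
  obtain ⟨Q, hQZ, hPQ⟩ := mem_iUnion₂.mp (hZcover hP)
  exact ⟨Q, hQZ, connectedComponentIn_eq (connectedComponentIn_mono Q hUT hPQ)⟩

theorem Continuous.finite_image_connectedComponentIn_sublevel [CompactSpace α]
    [LocallyConnectedSpace α] {ψ : α → ℝ} (hψ : Continuous ψ) {x y : ℝ} (hxy : x < y) :
    (connectedComponentIn {Q | ψ Q ≤ y} '' {Q | ψ Q ≤ x}).Finite :=
  (isClosed_le hψ continuous_const).isCompact.finite_image_connectedComponentIn
    (isOpen_lt hψ continuous_const) (fun Q (hQ : ψ Q ≤ x) => hQ.trans_lt hxy)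
    fun Q (hQ : ψ Q < y) => hQ.le

end Topology

theorem rsf_eq_ncard_image {M : Type*} [TopologicalSpace M] (φ : M → ℝ) (x y : ℝ) :
    rsf φ x y = (connectedComponentIn {Q | φ Q ≤ y} '' {P | φ P ≤ x}).ncard := by
  unfold rsf
  congr 1
  ext C
  simp only [mem_ofPred_eq, mem_image, eq_comm]

theorem rsf_homeo_inequality_general
    {M N : Type*} [TopologicalSpace M] [TopologicalSpace N] [CompactSpace N] [LocallyConnectedSpace N]
    {φ : M → ℝ} {ψ : N → ℝ} (hψ : Continuous ψ)
    (f : M ≃ₜ N) (h : ℝ) (hb : ∀ P : M, |φ P - ψ (f P)| ≤ h)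
    (x y : ℝ) (hxy : x < y) :
    rsf φ (x - h) (y + h) ≤ rsf ψ x y := by
  rw [rsf_eq_ncard_image, rsf_eq_ncard_image]
  set compN := connectedComponentIn {Q | ψ Q ≤ y}
  have hforth : MapsTo f {P | φ P ≤ x - h} {Q | ψ Q ≤ x} := fun P (hP : φ P ≤ x - h) =>
    show ψ (f P) ≤ x by linarith [(abs_le.mp (hb P)).1]
  have hback : MapsTo f.symm {Q | ψ Q ≤ y} {P | φ P ≤ y + h} := fun Q (hQ : ψ Q ≤ y) =>
    show φ (f.symm Q) ≤ y + h by linarith [f.apply_symm_apply Q ▸ (abs_le.mp (hb (f.symm Q))).2]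
  have hxy_sub : {Q | ψ Q ≤ x} ⊆ {Q | ψ Q ≤ y} := fun Q (hQ : ψ Q ≤ x) => hQ.trans hxy.le
  have hfin := hψ.finite_image_connectedComponentIn_sublevel hxy
  have hsub : (compN ∘ f) '' {P | φ P ≤ x - h} ⊆ compN '' {Q | ψ Q ≤ x} :=
    image_comp compN f _ ▸ image_mono hforth.image_subset
  calc (connectedComponentIn {P | φ P ≤ y + h} '' {P | φ P ≤ x - h}).ncard
      ≤ ((compN ∘ f) '' {P | φ P ≤ x - h}).ncard := by
        refine ncard_image_le_ncard_image_of_eq_imp_eq (hfin.subset hsub)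
          fun P hP P' hP' hPP' => ?_
        simpa using f.symm.continuous.continuousOn.connectedComponentIn_eq_of_mapsTo hback
          (hxy_sub (hforth hP)) (hxy_sub (hforth hP')) hPP'
    _ ≤ (compN '' {Q | ψ Q ≤ x}).ncard := ncard_le_ncard hsub hfin

theorem rsf_homeo_inequality
    {M N : Type*} [TopologicalSpace M] [CompactSpace M] [ConnectedSpace M] [LocallyConnectedSpace M] [T2Space M] [TopologicalSpace N] [CompactSpace N] [ConnectedSpace N] [LocallyConnectedSpace N] [T2Space N]
    {φ : M → ℝ} {ψ : N → ℝ} (hφ : Continuous φ) (hψ : Continuous ψ)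
    (f : M ≃ₜ N) (h : ℝ) (hb : ∀ P : M, |φ P - ψ (f P)| ≤ h)
    (x y : ℝ) (hxy : x < y) (hxy' : x - h < y + h) :
    rsf φ (x - h) (y + h) ≤ rsf ψ x y :=
  rsf_homeo_inequality_general hψ f h hb x y hxy
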